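/- For every natural number n ≥ 1 and every real c > 0, there exists a constant C > 0 such that for every z ∈ ℂ with Re z ≥ c one has |Γ^{(n)}(z)| ≤ C·(1 + |z|)^n·|Γ(z)|. -/

import Mathlib

open Finset

noncomputable def Complex.abs : AbsoluteValue ℂ ℝ := NormedField.toAbsoluteValue ℂ

lemma Complex.norm_eq_abs (z : ℂ) : ‖z‖ = Complex.abs z := rfl

lemma Complex.abs_apply (z : ℂ) : Complex.abs z = Real.sqrt (Complex.normSq z) := Complex.norm_def z

lemma Complex.normSq_eq_abs (z : ℂ) : Complex.normSq z = Complex.abs z ^ 2 :=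
  Complex.normSq_eq_norm_sq z

lemma Complex.re_le_abs (z : ℂ) : z.re ≤ Complex.abs z := Complex.re_le_norm z

lemma Complex.abs_natCast (n : ℕ) : Complex.abs (n : ℂ) = n := Complex.norm_natCast n

lemma Complex.abs_ofReal (r : ℝ) : Complex.abs (r : ℂ) = |r| := Complex.norm_real r

lemma Complex.abs_cpow_eq_rpow_re_of_pos {x : ℝ} (hx : 0 < x) (y : ℂ) :
    Complex.abs ((x : ℂ) ^ y) = x ^ y.re := Complex.norm_cpow_eq_rpow_re_of_pos hx y

/-- harmonic upper bound -/
lemma harm_upper : ∀ M : ℕ, ∑ k ∈ range (M+1), (1:ℝ)/(k+1) ≤ 1 + Real.log (M+1) := by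
  intro M
  induction M with
  | zero => simp
  | succ M ih =>
    rw [Finset.sum_range_succ]
    have h1 : (1:ℝ)/(M+1+1) ≤ Real.log ((M:ℝ)+1+1) - Real.log ((M:ℝ)+1) := by
      have hp : (0:ℝ) < (M:ℝ)+1 := by positivity
      have hq : (0:ℝ) < (M:ℝ)+1+1 := by positivity
      have := Real.log_le_sub_one_of_pos (x := ((M:ℝ)+1)/((M:ℝ)+1+1)) (by positivity)
      rw [Real.log_div hp.ne' hq.ne'] at this
      have : Real.log ((M:ℝ)+1) - Real.log ((M:ℝ)+1+1) ≤ ((M:ℝ)+1)/((M:ℝ)+1+1) - 1 := this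
      have he : ((M:ℝ)+1)/((M:ℝ)+1+1) - 1 = -(1/((M:ℝ)+1+1)) := by field_simp; ring
      linarith [this, he ▸ this]
    push_cast
    push_cast at ih
    linarith
/-- harmonic lower bound -/
lemma harm_lower : ∀ M : ℕ, Real.log (M+1) ≤ ∑ k ∈ range M, (1:ℝ)/(k+1) := by
  intro M
  induction M with
  | zero => simp
  | succ M ih =>
    rw [Finset.sum_range_succ]
    have hp : (0:ℝ) < (M:ℝ)+1 := by positivity
    have hq : (0:ℝ) < (M:ℝ)+1+1 := by positivity
    have := Real.log_le_sub_one_of_pos (x := ((M:ℝ)+1+1)/((M:ℝ)+1)) (by positivity)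
    rw [Real.log_div hq.ne' hp.ne'] at this
    have he : ((M:ℝ)+1+1)/((M:ℝ)+1) - 1 = 1/((M:ℝ)+1) := by field_simp; ring
    push_cast
    push_cast at ih
    linarith [he ▸ this]

/-- |H_{m+1} - log m| ≤ 2 for m ≥ 1 -/
lemma harm_log (m : ℕ) (hm : 1 ≤ m) :
    |∑ k ∈ range (m+1), (1:ℝ)/(k+1) - Real.log m| ≤ 2 := by
  have h1 := harm_upper m
  have h2 := harm_lower (m+1)
  have hm1 : (1:ℝ) ≤ (m:ℝ) := by exact_mod_cast hm
  have hlm : Real.log (m:ℝ) ≤ Real.log ((m:ℝ)+1) := by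
    apply Real.log_le_log (by linarith) (by linarith)
  have hul : Real.log ((m:ℝ)+1) ≤ Real.log (m:ℝ) + 1 := by
    have := Real.log_le_sub_one_of_pos (x := ((m:ℝ)+1)/(m:ℝ)) (by positivity)
    rw [Real.log_div (by linarith) (by linarith)] at this
    have he : ((m:ℝ)+1)/(m:ℝ) - 1 = 1/(m:ℝ) := by field_simp; ring
    have h1m : 1/(m:ℝ) ≤ 1 := by
      rw [div_le_one (by linarith)]; exact hm1
    linarith [he ▸ this]
  push_cast at h2
  have hlm2 : Real.log (m:ℝ) ≤ Real.log ((m:ℝ)+1+1) := by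
    apply Real.log_le_log (by linarith) (by linarith)
  rw [abs_le]
  constructor <;> linarith

lemma tele_sum (K N : ℕ) (h : K ≤ N) :
    ∑ k ∈ Ico K N, ((1:ℝ)/k - 1/(k+1)) = 1/K - 1/N := by
  have := Finset.sum_Ico_eq_sub (fun k => ((1:ℝ)/k - 1/(k+1))) h
  rw [this]
  have e1 : ∀ n : ℕ, ∑ i ∈ range n, ((1:ℝ)/i - 1/(i+1)) = -(1/(n:ℝ)) - -(1/((0:ℕ):ℝ)) := by
    intro n
    have := Finset.sum_range_sub (fun i => -(1/(i:ℝ))) n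
    rw [← this]
    apply Finset.sum_congr rfl
    intro i _
    push_cast
    ring
  rw [e1, e1]
  simp; ring

/-- Key finite-sum bound. -/
lemma sum_bound {d W : ℝ} (hd0 : 0 < d) (hd1 : d ≤ 1) (hW : d ≤ W) (N : ℕ) :
    ∑ k ∈ range N, (1+W) / (max (d+k) W * (k+1)) ≤ 4/d * (1 + Real.log (2+W)) + 2 := by
  have hW0 : 0 < W := lt_of_lt_of_le hd0 hW
  set K := ⌈W⌉₊ with hK
  have hK1 : 1 ≤ K := Nat.one_le_ceil_iff.mpr hW0
  have hWK : W ≤ K := Nat.le_ceil W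
  have hKW : (K:ℝ) ≤ W + 1 := le_of_lt (Nat.ceil_lt_add_one hW0.le)
  set f : ℕ → ℝ := fun k => (1+W) / (max (d+k) W * (k+1)) with hf
  have hfpos : ∀ k, 0 ≤ f k := by
    intro k
    apply div_nonneg (by linarith)
    apply mul_nonneg (le_trans hW0.le (le_max_right _ _)) (by positivity)
  set N' := max N K with hN'
  have step0 : ∑ k ∈ range N, f k ≤ ∑ k ∈ range N', f k := by
    apply Finset.sum_le_sum_of_subset_of_nonneg
    · exact Finset.range_subset_range.mpr (le_max_left _ _)
    · intro k _ _; exact hfpos k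
  have split : ∑ k ∈ range N', f k = ∑ k ∈ range K, f k + ∑ k ∈ Ico K N', f k := by
    rw [Finset.range_eq_Ico, ← Finset.sum_Ico_consecutive _ (Nat.zero_le K) (le_max_right N K),
      ← Finset.range_eq_Ico]
  -- head part
  have head : ∑ k ∈ range K, f k ≤ 4/d * (1 + Real.log (2+W)) := by
    have hpt : ∀ k : ℕ, f k ≤ (4/d) * (1/(k+1)) := by
      intro k
      have hmax : (d + W) / 2 ≤ max (d+k) W := by
        rcases le_total (d+(k:ℝ)) W with h | h
        · rw [max_eq_right h]; have : (0:ℝ) ≤ k := Nat.cast_nonneg k; linarith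
        · rw [max_eq_left h]; have : (0:ℝ) ≤ k := Nat.cast_nonneg k; linarith
      have hmaxpos : 0 < max (d+(k:ℝ)) W := lt_of_lt_of_le hW0 (le_max_right _ _)
      have h1 : (1+W)/(max (d+k) W) ≤ 4/d := by
        rw [div_le_div_iff₀ hmaxpos hd0]
        have h2 : (1+W)*d ≤ 2*(d+W) := by nlinarith
        calc (1+W)*d ≤ 2*(d+W) := h2
          _ ≤ 4 * ((d+W)/2) := by ring_nf; linarith
          _ ≤ 4 * max (d+(k:ℝ)) W := by linarith [hmax]
      have hk1 : (0:ℝ) < (k:ℝ)+1 := by positivity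
      rw [hf]
      simp only []
      rw [div_mul_eq_div_div]
      rw [div_eq_mul_one_div ((1+W) / max (d+(k:ℝ)) W) ((k:ℝ)+1)]
      apply mul_le_mul_of_nonneg_right h1 (by positivity)
    calc ∑ k ∈ range K, f k ≤ ∑ k ∈ range K, (4/d) * (1/((k:ℝ)+1)) :=
          Finset.sum_le_sum (fun k _ => hpt k)
      _ = (4/d) * ∑ k ∈ range K, (1:ℝ)/((k:ℝ)+1) := by rw [Finset.mul_sum]
      _ ≤ (4/d) * (1 + Real.log K) := by
          apply mul_le_mul_of_nonneg_left _ (by positivity)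
          obtain ⟨M, hM⟩ := Nat.exists_eq_add_of_le hK1
          rw [hM]
          have := harm_upper M
          calc ∑ k ∈ range (1+M), (1:ℝ)/(↑k+1) = ∑ k ∈ range (M+1), (1:ℝ)/(↑k+1) := by
                rw [Nat.add_comm]
            _ ≤ 1 + Real.log (M+1) := this
            _ = 1 + Real.log ((1+M : ℕ) : ℝ) := by push_cast; rw [add_comm (1:ℝ) (M:ℝ)]
      _ ≤ 4/d * (1 + Real.log (2+W)) := by
          apply mul_le_mul_of_nonneg_left _ (by positivity)
          have : (K:ℝ) ≤ 2 + W := by linarith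
          have hlog := Real.log_le_log (by exact_mod_cast Nat.pos_of_ne_zero (by omega)) this
          linarith
  -- tail part
  have tail : ∑ k ∈ Ico K N', f k ≤ 2 := by
    have hpt : ∀ k ∈ Ico K N', f k ≤ (1+W) * ((1:ℝ)/k - 1/(k+1)) := by
      intro k hk
      have hkK : K ≤ k := (Finset.mem_Ico.mp hk).1
      have hk1 : 1 ≤ k := le_trans hK1 hkK
      have hk1' : (1:ℝ) ≤ (k:ℝ) := by exact_mod_cast hk1
      have hmax : (k:ℝ) ≤ max (d+k) W := le_trans (by linarith) (le_max_left _ _)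
      have he : (1:ℝ)/k - 1/(k+1) = 1/(k*(k+1)) := by
        field_simp
        ring
      rw [hf]; simp only []
      rw [he]
      rw [div_le_iff₀ (by positivity)]
      have h1 : (1+W) * ((1:ℝ)/(k*(k+1))) * (max (d+k) W * (k+1)) =
          (1+W) * (max (d+(k:ℝ)) W / k) := by
        field_simp
      rw [h1]
      have h2 : (1:ℝ) ≤ max (d+(k:ℝ)) W / k := by
        rw [le_div_iff₀ (by positivity)]; linarith
      nlinarith [hW0]
    calc ∑ k ∈ Ico K N', f k ≤ ∑ k ∈ Ico K N', (1+W) * ((1:ℝ)/k - 1/(k+1)) :=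
          Finset.sum_le_sum hpt
      _ = (1+W) * ∑ k ∈ Ico K N', ((1:ℝ)/k - 1/(k+1)) := by rw [Finset.mul_sum]
      _ = (1+W) * ((1:ℝ)/K - 1/N') := by rw [tele_sum K N' (le_max_right _ _)]
      _ ≤ (1+W) * (1/K) := by
          apply mul_le_mul_of_nonneg_left _ (by linarith)
          have : (0:ℝ) ≤ 1/(N':ℝ) := by positivity
          linarith
      _ ≤ 2 := by
          rw [mul_one_div, div_le_iff₀ (by exact_mod_cast Nat.pos_of_ne_zero (by omega))]
          have h1 : (1:ℝ) ≤ (K:ℝ) := by exact_mod_cast hK1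
          linarith
  linarith [step0, split ▸ step0, head, tail]

/-- `log |1+u| ≤ Re u + |u|²/2`. -/
lemma log_abs_one_add_le (u : ℂ) (hu : 1 + u ≠ 0) :
    Real.log (Complex.abs (1+u)) ≤ u.re + (Complex.abs u)^2/2 := by
  have h1 : (Complex.abs (1+u))^2 = 1 + 2*u.re + (Complex.abs u)^2 := by
    rw [← Complex.normSq_eq_abs, ← Complex.normSq_eq_abs]
    simp [Complex.normSq_apply]
    ring
  have h2 : 0 < Complex.abs (1+u) := by
    simpa [AbsoluteValue.pos_iff] using hu
  have h3 : Real.log ((Complex.abs (1+u))^2) ≤ (Complex.abs (1+u))^2 - 1 :=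
    Real.log_le_sub_one_of_pos (by positivity)
  rw [Real.log_pow] at h3
  push_cast at h3
  rw [h1] at h3
  linarith

/-- sum of inverse squares bound -/
lemma inv_sq_sum {d : ℝ} (hd0 : 0 < d) (N : ℕ) :
    ∑ k ∈ range N, 1/(d+k)^2 ≤ 1/d^2 + 2 := by
  cases N with
  | zero => simp; positivity
  | succ n =>
    rw [Finset.sum_range_succ']
    have h0 : 1/(d+(0:ℕ))^2 = 1/d^2 := by norm_num
    rw [h0]
    have hpt : ∀ i : ℕ, 1/(d+(i+1:ℕ))^2 ≤ 2/(i+1:ℝ) - 2/(i+2:ℝ) := by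
      intro i
      have h1 : ((i:ℝ)+1)^2 ≤ (d+(i+1:ℕ))^2 := by
        push_cast
        nlinarith [Nat.cast_nonneg (α := ℝ) i]
      have h2 : (1:ℝ)/(d+(i+1:ℕ))^2 ≤ 1/((i:ℝ)+1)^2 := by
        apply div_le_div_of_nonneg_left (by norm_num) (by positivity) h1
      have h3 : (1:ℝ)/((i:ℝ)+1)^2 ≤ 2/(((i:ℝ)+1)*((i:ℝ)+2)) := by
        rw [div_le_div_iff₀ (by positivity) (by positivity)]
        nlinarith [Nat.cast_nonneg (α := ℝ) i]
      have h4 : (2:ℝ)/(((i:ℝ)+1)*((i:ℝ)+2)) = 2/((i:ℝ)+1) - 2/((i:ℝ)+2) := by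
        field_simp
        ring
      push_cast
      push_cast at h2 h3 h4
      linarith
    have htel : ∑ i ∈ range n, (2/((i:ℝ)+1) - 2/((i:ℝ)+2)) = 2/(1:ℝ) - 2/((n:ℝ)+1) := by
      have h := Finset.sum_range_sub (fun i => -(2/((i:ℝ)+1))) n
      have e : ∀ i ∈ range n, (2/((i:ℝ)+1) - 2/((i:ℝ)+2)) =
          (-(2/(((i+1:ℕ):ℝ)+1)) - -(2/((i:ℝ)+1))) := by
        intro i _
        push_cast
        ring
      rw [Finset.sum_congr rfl e, h]
      norm_num
      ring
    have hsum : ∑ i ∈ range n, 1/(d+(i+1:ℕ))^2 ≤ 2/(1:ℝ) - 2/((n:ℝ)+1) := by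
      rw [← htel]
      exact Finset.sum_le_sum (fun i _ => hpt i)
    have : (0:ℝ) ≤ 2/((n:ℝ)+1) := by positivity
    linarith

lemma abs_add_nat_ge {d : ℝ} (hd : 0 < d) {s : ℂ} (hs : d ≤ s.re) (k : ℕ) :
    max (d + k) (Complex.abs s) ≤ Complex.abs (s + k) := by
  apply max_le
  · calc d + (k:ℝ) ≤ s.re + k := by linarith
      _ = (s + k).re := by simp
      _ ≤ Complex.abs (s + k) := Complex.re_le_abs _
  · rw [Complex.abs_apply, Complex.abs_apply]
    apply Real.sqrt_le_sqrt
    simp only [Complex.normSq_apply, Complex.add_re, Complex.add_im, Complex.natCast_re,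
      Complex.natCast_im, add_zero]
    nlinarith [Nat.cast_nonneg (α := ℝ) k, hd.trans_le hs]

lemma abs_add_nat_pos {d : ℝ} (hd : 0 < d) {s : ℂ} (hs : d ≤ s.re) (k : ℕ) :
    d + k ≤ Complex.abs (s + k) :=
  le_trans (le_max_left _ _) (abs_add_nat_ge hd hs k)

lemma add_nat_ne_zero {d : ℝ} (hd : 0 < d) {s : ℂ} (hs : d ≤ s.re) (k : ℕ) :
    s + (k:ℂ) ≠ 0 := by
  intro h
  have := abs_add_nat_pos hd hs k
  rw [h] at this
  simp at this
  nlinarith [Nat.cast_nonneg (α := ℝ) k]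

/-- The key ratio estimate for `GammaSeq`. -/
lemma gammaSeq_ratio {d : ℝ} (hd0 : 0 < d) (hd1 : d ≤ 1) {z w : ℂ}
    (hz : d ≤ z.re) (hw : d ≤ w.re) (hzw : Complex.abs (z - w) ≤ d/4)
    (m : ℕ) (hm : 1 ≤ m) :
    Complex.abs (Complex.GammaSeq w m) ≤
      Real.exp 3 * (3 + Complex.abs z) * Complex.abs (Complex.GammaSeq z m) := by
  have hm0 : (0:ℝ) < m := by exact_mod_cast hm
  have hzne : ∀ k : ℕ, z + (k:ℂ) ≠ 0 := fun k => add_nat_ne_zero hd0 hz k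
  have hwne : ∀ k : ℕ, w + (k:ℂ) ≠ 0 := fun k => add_nat_ne_zero hd0 hw k
  have hzabs : ∀ k : ℕ, 0 < Complex.abs (z + k) :=
    fun k => (Complex.abs.pos_iff).mpr (hzne k)
  have hwabs : ∀ k : ℕ, 0 < Complex.abs (w + k) :=
    fun k => (Complex.abs.pos_iff).mpr (hwne k)
  have hwlo : ∀ k : ℕ, d + k ≤ Complex.abs (w + k) := fun k => abs_add_nat_pos hd0 hw k
  set T := Finset.range (m+1) with hT
  set S : ℂ := ∑ k ∈ T, (w + (k:ℂ))⁻¹ with hS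
  -- Step A: pointwise log bound
  have stepA : ∀ k : ℕ, Real.log (Complex.abs (z+k)) - Real.log (Complex.abs (w+k)) ≤
      ((z-w) * (w+k)⁻¹).re + (Complex.abs (z-w))^2 * (1/(d+k)^2) / 2 := by
    intro k
    set u : ℂ := (z-w) / (w+k) with hu
    have h1u : 1 + u = (z+k)/(w+k) := by
      rw [hu, add_div' _ _ _ (hwne k)]
      congr 1
      ring
    have h1une : 1 + u ≠ 0 := by
      rw [h1u]
      exact div_ne_zero (hzne k) (hwne k)
    have hlog : Real.log (Complex.abs (z+k)) - Real.log (Complex.abs (w+k)) =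
        Real.log (Complex.abs (1+u)) := by
      rw [h1u, map_div₀, Real.log_div (hzabs k).ne' (hwabs k).ne']
    rw [hlog]
    have hb := log_abs_one_add_le u h1une
    have hure : u.re = ((z-w) * (w+k)⁻¹).re := by rw [hu, div_eq_mul_inv]
    have husq : (Complex.abs u)^2 ≤ (Complex.abs (z-w))^2 * (1/(d+k)^2) := by
      rw [hu, map_div₀, div_pow]
      rw [div_le_iff₀ (pow_pos (hwabs k) 2)]
      have h2 : (d+(k:ℝ))^2 ≤ (Complex.abs (w+k))^2 := by
        apply sq_le_sq' _ (hwlo k)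
        have : (0:ℝ) ≤ d + k := by positivity
        nlinarith [hwabs k]
      calc (Complex.abs (z-w))^2 = (Complex.abs (z-w))^2 * 1 := by ring
        _ ≤ (Complex.abs (z-w))^2 * (1/(d+k)^2 * (Complex.abs (w+k))^2) := by
            apply mul_le_mul_of_nonneg_left _ (by positivity)
            rw [one_div, ← div_eq_inv_mul, le_div_iff₀ (by positivity)]
            linarith [h2]
        _ = Complex.abs (z-w)^2 * (1/(d+k)^2) * Complex.abs (w+k)^2 := by ring
    rw [hure] at hb
    linarith
  -- Step B : sum the log bounds
  have stepB : ∑ k ∈ T, Real.log (Complex.abs (z+k)) - ∑ k ∈ T, Real.log (Complex.abs (w+k)) ≤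
      ((z-w) * S).re + (Complex.abs (z-w))^2 * (1/d^2 + 2) / 2 := by
    rw [← Finset.sum_sub_distrib]
    have h1 : ∑ k ∈ T, (Real.log (Complex.abs (z+k)) - Real.log (Complex.abs (w+k))) ≤
        ∑ k ∈ T, (((z-w) * (w+k)⁻¹).re + (Complex.abs (z-w))^2 * (1/(d+k)^2) / 2) :=
      Finset.sum_le_sum (fun k _ => stepA k)
    refine h1.trans ?_
    rw [Finset.sum_add_distrib]
    have h2 : ∑ k ∈ T, ((z-w) * (w+k)⁻¹).re = ((z-w) * S).re := by
      rw [hS, Finset.mul_sum, Complex.re_sum]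
    have h3 : ∑ k ∈ T, (Complex.abs (z-w))^2 * (1/(d+k)^2) / 2 ≤
        (Complex.abs (z-w))^2 * (1/d^2 + 2) / 2 := by
      have := inv_sq_sum hd0 (m+1)
      calc ∑ k ∈ T, (Complex.abs (z-w))^2 * (1/(d+k)^2) / 2
          = (Complex.abs (z-w))^2/2 * ∑ k ∈ T, 1/(d+k)^2 := by
            rw [Finset.mul_sum]; apply Finset.sum_congr rfl; intro k _; ring
        _ ≤ (Complex.abs (z-w))^2/2 * (1/d^2 + 2) := by
            apply mul_le_mul_of_nonneg_left _ (by positivity)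
            exact this
        _ = (Complex.abs (z-w))^2 * (1/d^2 + 2) / 2 := by ring
    linarith [h2 ▸ le_refl (∑ k ∈ T, ((z-w) * (w+k)⁻¹).re)]
  -- Step C : harmonic comparison
  have hWw : d ≤ Complex.abs w := le_trans hw (Complex.re_le_abs w)
  have stepC : Complex.abs (S - (Real.log m : ℂ)) ≤
      4/d * (1 + Real.log (2 + Complex.abs w)) + 4 := by
    set Hc : ℂ := ∑ k ∈ T, ((k:ℂ)+1)⁻¹ with hHc
    have h1 : Complex.abs (S - Hc) ≤ 4/d * (1 + Real.log (2 + Complex.abs w)) + 2 := by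
      have hsub : S - Hc = ∑ k ∈ T, ((w+(k:ℂ))⁻¹ - ((k:ℂ)+1)⁻¹) := by
        rw [hS, hHc, Finset.sum_sub_distrib]
      rw [hsub]
      refine le_trans (Complex.abs.sum_le _ _) ?_
      have hpt : ∀ k ∈ T, Complex.abs ((w+(k:ℂ))⁻¹ - ((k:ℂ)+1)⁻¹) ≤
          (1 + Complex.abs w) / (max (d+(k:ℝ)) (Complex.abs w) * ((k:ℝ)+1)) := by
        intro k _
        have hkne : ((k:ℂ)+1) ≠ 0 := by
          intro h
          have : ((k:ℝ)+1) = 0 := by exact_mod_cast congrArg Complex.re h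
          nlinarith [Nat.cast_nonneg (α := ℝ) k]
        have heq : (w+(k:ℂ))⁻¹ - ((k:ℂ)+1)⁻¹ = (1 - w)/((w+k)*((k:ℂ)+1)) := by
          rw [inv_sub_inv (hwne k) hkne]
          congr 1
          ring
        rw [heq, map_div₀, map_mul]
        have hnum : Complex.abs (1 - w) ≤ 1 + Complex.abs w := by
          rw [sub_eq_add_neg]
          refine le_trans (Complex.abs.add_le _ _) ?_
          simp
        have hk1 : Complex.abs ((k:ℂ)+1) = (k:ℝ)+1 := by
          have : ((k:ℂ)+1) = ((k+1:ℕ):ℂ) := by push_cast; ring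
          rw [this, Complex.abs_natCast]
          push_cast
          ring
        have hden : max (d+(k:ℝ)) (Complex.abs w) * ((k:ℝ)+1) ≤
            Complex.abs (w+k) * Complex.abs ((k:ℂ)+1) := by
          rw [hk1]
          apply mul_le_mul_of_nonneg_right (abs_add_nat_ge hd0 hw k) (by positivity)
        have hdpos : 0 < max (d+(k:ℝ)) (Complex.abs w) * ((k:ℝ)+1) := by
          apply mul_pos (lt_of_lt_of_le hd0 (le_trans hWw (le_max_right _ _))) (by positivity)
        exact div_le_div₀ (by positivity) hnum hdpos hden
      refine le_trans (Finset.sum_le_sum hpt) ?_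
      exact sum_bound hd0 hd1 hWw (m+1)
    have h2 : Complex.abs (Hc - (Real.log m : ℂ)) ≤ 2 := by
      have hHr : Hc = (((∑ k ∈ T, (1:ℝ)/(k+1)) : ℝ) : ℂ) := by
        rw [hHc, Complex.ofReal_sum]
        apply Finset.sum_congr rfl
        intro k _
        push_cast
        rw [one_div]
      rw [hHr, ← Complex.ofReal_sub, Complex.abs_ofReal]
      exact harm_log m hm
    calc Complex.abs (S - (Real.log m : ℂ))
        = Complex.abs ((S - Hc) + (Hc - (Real.log m : ℂ))) := by ring_nf
      _ ≤ Complex.abs (S - Hc) + Complex.abs (Hc - (Real.log m : ℂ)) := Complex.abs.add_le _ _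
      _ ≤ 4/d * (1 + Real.log (2 + Complex.abs w)) + 4 := by linarith
  -- Step D
  have hzabs3 : (0:ℝ) < 3 + Complex.abs z := by positivity
  have hwz : Complex.abs w ≤ Complex.abs z + 1 := by
    have h3 := Complex.abs.add_le z (w - z)
    have h4 : z + (w - z) = w := by ring
    rw [h4] at h3
    rw [Complex.abs.map_sub w z] at h3
    linarith
  have hL : Real.log (2 + Complex.abs w) ≤ Real.log (3 + Complex.abs z) := by
    apply Real.log_le_log (by positivity) (by linarith)
  have stepD : (w.re - z.re) * Real.log m + ((z-w) * S).re ≤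
      2 + Real.log (3 + Complex.abs z) := by
    have hre : ((z-w) * (Real.log m : ℂ)).re = (z.re - w.re) * Real.log m := by
      rw [Complex.mul_re, Complex.ofReal_re, Complex.ofReal_im, Complex.sub_re]
      ring
    have he : (w.re - z.re) * Real.log m + ((z-w) * S).re =
        ((z-w) * (S - (Real.log m : ℂ))).re := by
      rw [mul_sub, Complex.sub_re, hre]
      ring
    rw [he]
    have hC0 : (0:ℝ) ≤ 4/d * (1 + Real.log (2 + Complex.abs w)) + 4 := by
      have : (0:ℝ) ≤ Real.log (2 + Complex.abs w) := Real.log_nonneg (by linarith [Complex.abs.nonneg w])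
      positivity
    calc ((z-w) * (S - (Real.log m : ℂ))).re
        ≤ Complex.abs ((z-w) * (S - (Real.log m : ℂ))) := Complex.re_le_abs _
      _ = Complex.abs (z-w) * Complex.abs (S - (Real.log m : ℂ)) := map_mul _ _ _
      _ ≤ (d/4) * (4/d * (1 + Real.log (2 + Complex.abs w)) + 4) := by
          apply mul_le_mul hzw stepC (Complex.abs.nonneg _) (by linarith)
      _ = (1 + Real.log (2 + Complex.abs w)) + d := by
          field_simp
      _ ≤ 2 + Real.log (3 + Complex.abs z) := by linarith
  -- Step E
  have stepE : (Complex.abs (z-w))^2 * (1/d^2 + 2) / 2 ≤ 1 := by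
    have h1 : (Complex.abs (z-w))^2 ≤ (d/4)^2 := by
      apply sq_le_sq' _ hzw
      have := Complex.abs.nonneg (z-w)
      linarith
    have hQ : (0:ℝ) ≤ 1/d^2 + 2 := by positivity
    have h2 : (d/4)^2 * (1/d^2 + 2) = 1/16 + d^2/8 := by
      field_simp
      ring
    have h3 : d^2 ≤ 1 := by nlinarith
    nlinarith [mul_le_mul_of_nonneg_right h1 hQ]
  -- Step F/G: exponentiate
  set Pz : ℝ := ∏ k ∈ T, Complex.abs (z+k) with hPz
  set Pw : ℝ := ∏ k ∈ T, Complex.abs (w+k) with hPw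
  have hPzpos : 0 < Pz := Finset.prod_pos (fun k _ => hzabs k)
  have hPwpos : 0 < Pw := Finset.prod_pos (fun k _ => hwabs k)
  have hlogPz : Real.log Pz = ∑ k ∈ T, Real.log (Complex.abs (z+k)) :=
    Real.log_prod (fun k _ => (hzabs k).ne')
  have hlogPw : Real.log Pw = ∑ k ∈ T, Real.log (Complex.abs (w+k)) :=
    Real.log_prod (fun k _ => (hwabs k).ne')
  set E : ℝ := Real.exp 3 * (3 + Complex.abs z) with hE
  have hEpos : 0 < E := mul_pos (Real.exp_pos 3) hzabs3
  have key : (m:ℝ)^(w.re) * Pz ≤ E * ((m:ℝ)^(z.re) * Pw) := by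
    have hXpos : 0 < (m:ℝ)^(w.re) * Pz := mul_pos (Real.rpow_pos_of_pos hm0 _) hPzpos
    have hYpos : 0 < E * ((m:ℝ)^(z.re) * Pw) :=
      mul_pos hEpos (mul_pos (Real.rpow_pos_of_pos hm0 _) hPwpos)
    rw [← Real.exp_log hXpos, ← Real.exp_log hYpos]
    apply Real.exp_le_exp.mpr
    have hlogX : Real.log ((m:ℝ)^(w.re) * Pz) =
        w.re * Real.log m + ∑ k ∈ T, Real.log (Complex.abs (z+k)) := by
      rw [Real.log_mul (Real.rpow_pos_of_pos hm0 _).ne' hPzpos.ne', Real.log_rpow hm0, hlogPz]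
    have hlogY : Real.log (E * ((m:ℝ)^(z.re) * Pw)) =
        (3 + Real.log (3 + Complex.abs z)) +
          (z.re * Real.log m + ∑ k ∈ T, Real.log (Complex.abs (w+k))) := by
      rw [Real.log_mul hEpos.ne' (mul_pos (Real.rpow_pos_of_pos hm0 _) hPwpos).ne',
        hE, Real.log_mul (Real.exp_pos 3).ne' hzabs3.ne', Real.log_exp,
        Real.log_mul (Real.rpow_pos_of_pos hm0 _).ne' hPwpos.ne', Real.log_rpow hm0, hlogPw]
    rw [hlogX, hlogY]
    linarith
  -- Step H : conclude
  have habsG : ∀ s : ℂ, Complex.abs (Complex.GammaSeq s m) =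
      (m:ℝ)^(s.re) * (m.factorial : ℝ) / ∏ k ∈ T, Complex.abs (s+(k:ℂ)) := by
    intro s
    rw [Complex.GammaSeq, map_div₀, map_mul, map_prod]
    have hcast : ((m:ℕ):ℂ) = (((m:ℝ)):ℂ) := by norm_num
    rw [hcast, Complex.abs_cpow_eq_rpow_re_of_pos hm0, Complex.abs_natCast]
  have habsGw : Complex.abs (Complex.GammaSeq w m) = (m:ℝ)^(w.re) * (m.factorial : ℝ) / Pw :=
    habsG w
  have habsGz : Complex.abs (Complex.GammaSeq z m) = (m:ℝ)^(z.re) * (m.factorial : ℝ) / Pz :=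
    habsG z
  rw [habsGw, habsGz, ← mul_div_assoc]
  rw [div_le_div_iff₀ hPwpos hPzpos]
  have hfac : (0:ℝ) ≤ (m.factorial : ℝ) := by positivity
  calc (m:ℝ)^(w.re) * (m.factorial : ℝ) * Pz = ((m:ℝ)^(w.re) * Pz) * (m.factorial : ℝ) := by ring
    _ ≤ (E * ((m:ℝ)^(z.re) * Pw)) * (m.factorial : ℝ) := mul_le_mul_of_nonneg_right key hfac
    _ = E * ((m:ℝ)^(z.re) * (m.factorial : ℝ)) * Pw := by ring

open Filter in
/-- Ratio bound for Gamma itself, by passing to the limit. -/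
lemma gamma_ratio {d : ℝ} (hd0 : 0 < d) (hd1 : d ≤ 1) {z w : ℂ}
    (hz : d ≤ z.re) (hw : d ≤ w.re) (hzw : Complex.abs (z - w) ≤ d/4) :
    Complex.abs (Complex.Gamma w) ≤
      Real.exp 3 * (3 + Complex.abs z) * Complex.abs (Complex.Gamma z) := by
  have h1 := (Complex.GammaSeq_tendsto_Gamma w).norm
  have h2 := (Complex.GammaSeq_tendsto_Gamma z).norm.const_mul
    (Real.exp 3 * (3 + Complex.abs z))
  have hev : (fun m => ‖Complex.GammaSeq w m‖) ≤ᶠ[atTop]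
      (fun m => Real.exp 3 * (3 + Complex.abs z) * ‖Complex.GammaSeq z m‖) := by
    refine Filter.eventually_atTop.mpr ⟨1, fun m hm => ?_⟩
    simpa [Complex.norm_eq_abs] using gammaSeq_ratio hd0 hd1 hz hw hzw m hm
  have := le_of_tendsto_of_tendsto h1 h2 hev
  simpa [Complex.norm_eq_abs] using this

open intervalIntegral in
/-- Cauchy estimate for iterated derivatives. -/
lemma cauchy_bound (n : ℕ) {f : ℂ → ℂ} {z : ℂ} {R M : ℝ} (hR : 0 < R)
    (hf : DifferentiableOn ℂ f (Metric.closedBall z R))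
    (hM : ∀ w ∈ Metric.closedBall z R, Complex.abs (f w) ≤ M) :
    Complex.abs (iteratedDeriv n f z) ≤ (n.factorial : ℝ) * M / R^n := by
  have hM0 : 0 ≤ M :=
    le_trans (Complex.abs.nonneg _) (hM z (Metric.mem_closedBall_self hR.le))
  set R' : NNReal := ⟨R, hR.le⟩ with hR'
  have hRc : (R' : ℝ) = R := rfl
  have hR'0 : 0 < R' := by exact_mod_cast hR
  have hball : Metric.closedBall z (R':ℝ) = Metric.closedBall z R := by rw [hRc]
  have h : HasFPowerSeriesOnBall f (cauchyPowerSeries f z R') z R' :=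
    DifferentiableOn.hasFPowerSeriesOnBall (by rw [hball]; exact hf) hR'0
  have h1 : iteratedDeriv n f z = iteratedFDeriv ℂ n f z (fun _ => 1) :=
    iteratedDeriv_eq_iteratedFDeriv
  have h2 := (h.factorial_smul (y := (1:ℂ)) n).symm
  rw [h1, h2]
  have h3 : Complex.abs ((n.factorial) • (cauchyPowerSeries f z R' n fun _ => 1)) =
      (n.factorial : ℝ) * Complex.abs (cauchyPowerSeries f z R' n fun _ => 1) := by
    rw [nsmul_eq_mul, map_mul, Complex.abs_natCast]
  rw [h3]
  have h4 : Complex.abs (cauchyPowerSeries f z R' n fun _ => 1) ≤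
      ‖cauchyPowerSeries f z R' n‖ := by
    have := (cauchyPowerSeries f z R' n).le_opNorm (fun _ => (1:ℂ))
    simpa [Complex.norm_eq_abs] using this
  have hmem : ∀ θ : ℝ, circleMap z R θ ∈ Metric.closedBall z R :=
    fun θ => circleMap_mem_closedBall z hR.le θ
  have hcont : Continuous fun θ : ℝ => ‖f (circleMap z R θ)‖ :=
    (hf.continuousOn.comp_continuous (continuous_circleMap z R) hmem).norm
  have hint : (∫ θ : ℝ in (0)..2 * Real.pi, ‖f (circleMap z R θ)‖) ≤ 2 * Real.pi * M := by
    have hle : ∀ θ ∈ Set.Icc (0:ℝ) (2 * Real.pi), ‖f (circleMap z R θ)‖ ≤ M := by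
      intro θ _
      rw [Complex.norm_eq_abs]
      exact hM _ (hmem θ)
    calc (∫ θ : ℝ in (0)..2 * Real.pi, ‖f (circleMap z R θ)‖)
        ≤ ∫ _ : ℝ in (0)..2 * Real.pi, M := by
          apply intervalIntegral.integral_mono_on Real.two_pi_pos.le
            (hcont.intervalIntegrable _ _) (intervalIntegrable_const) hle
      _ = 2 * Real.pi * M := by
          rw [intervalIntegral.integral_const, smul_eq_mul]
          ring
  have h5 := norm_cauchyPowerSeries_le f z (R':ℝ) n
  rw [hRc] at h5
  have habs : |R| = R := abs_of_pos hR
  have h6 : ‖cauchyPowerSeries f z R' n‖ ≤ M * (R⁻¹)^n := by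
    refine le_trans h5 ?_
    rw [habs]
    apply mul_le_mul_of_nonneg_right _ (by positivity)
    calc (2 * Real.pi)⁻¹ * ∫ θ : ℝ in (0)..2 * Real.pi, ‖f (circleMap z R θ)‖
        ≤ (2 * Real.pi)⁻¹ * (2 * Real.pi * M) := by
          apply mul_le_mul_of_nonneg_left hint (by positivity)
      _ = M := by
          field_simp
  calc (n.factorial : ℝ) * Complex.abs (cauchyPowerSeries f z R' n fun _ => 1)
      ≤ (n.factorial : ℝ) * (M * (R⁻¹)^n) := by
        apply mul_le_mul_of_nonneg_left (le_trans h4 h6) (by positivity)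
    _ = (n.factorial : ℝ) * M / R^n := by
        rw [inv_pow]
        ring

/-- Polynomial domination of Gamma derivatives: for `n ≥ 1` and `c > 0` there is
`C > 0` with `|Γ⁽ⁿ⁾(z)| ≤ C·(1+|z|)ⁿ·|Γ(z)|` on the half plane `Re z ≥ c`. -/
theorem gamma_iteratedDeriv_bound (n : ℕ) (hn : 1 ≤ n) (c : ℝ) (hc : 0 < c) :
    ∃ C : ℝ, 0 < C ∧ ∀ z : ℂ, c ≤ z.re →
      ‖iteratedDeriv n Complex.Gamma z‖ ≤
        C * (1 + ‖z‖) ^ n * ‖Complex.Gamma z‖ := by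
  show ∃ C : ℝ, 0 < C ∧ ∀ z : ℂ, c ≤ z.re →
      Complex.abs (iteratedDeriv n Complex.Gamma z) ≤
        C * (1 + Complex.abs z) ^ n * Complex.abs (Complex.Gamma z)
  set d : ℝ := min c 2 / 2 with hd
  have hd0 : 0 < d := by positivity
  have hd1 : d ≤ 1 := by
    rw [hd]
    have : min c 2 ≤ 2 := min_le_right _ _
    linarith
  have hdc : 2 * d ≤ c := by
    rw [hd]
    have : min c 2 ≤ c := min_le_left _ _
    linarith
  set R : ℝ := d / 4 with hRdef
  have hR : 0 < R := by positivity
  refine ⟨3 * Real.exp 3 * (n.factorial : ℝ) / R^n, by positivity, ?_⟩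
  intro z hzre
  have hz : d ≤ z.re := by linarith
  have hwre : ∀ w ∈ Metric.closedBall z R, d ≤ w.re ∧ Complex.abs (z - w) ≤ d/4 := by
    intro w hw
    have hdist : Complex.abs (w - z) ≤ R := by
      rw [Metric.mem_closedBall] at hw
      simpa [Complex.dist_eq, Complex.norm_eq_abs] using hw
    have h1 : Complex.abs (z - w) ≤ d/4 := by
      rw [Complex.abs.map_sub]
      exact hdist
    refine ⟨?_, h1⟩
    have h2 : (z - w).re ≤ Complex.abs (z - w) := Complex.re_le_abs _
    rw [Complex.sub_re] at h2
    linarith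
  have hdiff : DifferentiableOn ℂ Complex.Gamma (Metric.closedBall z R) := by
    intro w hw
    have hwd : d ≤ w.re := (hwre w hw).1
    have hne : ∀ m : ℕ, w ≠ -m := by
      intro m hwm
      have : w.re = -(m:ℝ) := by rw [hwm]; simp
      have : (0:ℝ) ≤ (m:ℝ) := Nat.cast_nonneg m
      linarith [hwd]
    exact (Complex.differentiableAt_Gamma w hne).differentiableWithinAt
  have hM : ∀ w ∈ Metric.closedBall z R,
      Complex.abs (Complex.Gamma w) ≤
        Real.exp 3 * (3 + Complex.abs z) * Complex.abs (Complex.Gamma z) := by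
    intro w hw
    exact gamma_ratio hd0 hd1 hz (hwre w hw).1 (hwre w hw).2
  have hcb := cauchy_bound n hdiff hM (hR := hR)
  refine le_trans hcb ?_
  have habs0 : (0:ℝ) ≤ Complex.abs z := Complex.abs.nonneg z
  have hGam0 : (0:ℝ) ≤ Complex.abs (Complex.Gamma z) := Complex.abs.nonneg _
  have h3 : 3 + Complex.abs z ≤ 3 * (1 + Complex.abs z) := by linarith
  have hpow : 1 + Complex.abs z ≤ (1 + Complex.abs z)^n :=
    le_self_pow₀ (by linarith) (by omega)
  have hfac0 : (0:ℝ) ≤ (n.factorial : ℝ) := by positivity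
  have hRn : (0:ℝ) < R^n := by positivity
  rw [div_le_iff₀ hRn]
  have key : (n.factorial : ℝ) * (Real.exp 3 * (3 + Complex.abs z) *
      Complex.abs (Complex.Gamma z)) ≤
      3 * Real.exp 3 * (n.factorial : ℝ) / R^n * (1 + Complex.abs z)^n *
        Complex.abs (Complex.Gamma z) * R^n := by
    rw [div_mul_eq_mul_div, div_mul_eq_mul_div, div_mul_eq_mul_div, mul_div_assoc,
      div_self hRn.ne', mul_one]
    have e3 : (0:ℝ) < Real.exp 3 := Real.exp_pos 3
    calc (n.factorial : ℝ) * (Real.exp 3 * (3 + Complex.abs z) * Complex.abs (Complex.Gamma z))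
        ≤ (n.factorial : ℝ) * (Real.exp 3 * (3 * (1 + Complex.abs z)) *
            Complex.abs (Complex.Gamma z)) := by
          apply mul_le_mul_of_nonneg_left _ hfac0
          apply mul_le_mul_of_nonneg_right _ hGam0
          apply mul_le_mul_of_nonneg_left h3 e3.le
      _ ≤ (n.factorial : ℝ) * (Real.exp 3 * (3 * (1 + Complex.abs z)^n) *
            Complex.abs (Complex.Gamma z)) := by
          apply mul_le_mul_of_nonneg_left _ hfac0
          apply mul_le_mul_of_nonneg_right _ hGam0
          apply mul_le_mul_of_nonneg_left _ e3.le
          linarith [hpow]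
      _ = 3 * Real.exp 3 * (n.factorial : ℝ) * (1 + Complex.abs z)^n *
            Complex.abs (Complex.Gamma z) := by ring
  exact key
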